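/- arXiv:0811.2590 — 3 statements merged into one kernel-verified Lean document; each statement's English description precedes it below -/
import Mathlib

section
/- Let A be a finite-dimensional Frobenius algebra over a field k with trace ε, and let f: A → A be an algebra automorphism with f² = id and ε(ab) = ε(b·f(a)) for all a, b ∈ A. Let [A,A]_t be the k-span of elements ab − b·f(a). Then the dual vector space of A/[A,A]_t is isomorphic to the center Z(A). -/
/-!
The trace form `(a, b) ↦ ε (a * b)` identifies `A` with its dual, and the dual of `A ⧸ W` is the
annihilator of `W = [A, A]_t`. The twisting rule gives
`ε (c * (a * b - b * f a)) = ε ((c * a - a * c) * b)`, so by nondegeneracy `ε (c * -)` kills `W`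
exactly when `c` commutes with every `a`.
-/

open Module

section TwistedTrace

variable {R A : Type*} [CommRing R] [Ring A] [Algebra R A]

variable (R) in
def twistedCommutatorSpan (f : A → A) : Submodule R A :=
  Submodule.span R {x : A | ∃ a b : A, x = a * b - b * f a}

def frobeniusForm (ε : A →ₗ[R] R) : LinearMap.BilinForm R A :=
  (LinearMap.mul R A).compr₂ ε

@[simp]
theorem frobeniusForm_apply (ε : A →ₗ[R] R) (a b : A) : frobeniusForm ε a b = ε (a * b) :=
  rfl

variable {ε : A →ₗ[R] R} {f : A → A}

theorem trace_mul_twistedCommutator (htw : ∀ a b : A, ε (a * b) = ε (b * f a)) (a b c : A) :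
    ε (c * (a * b - b * f a)) = ε ((c * a - a * c) * b) := by
  rw [mul_sub, sub_mul, map_sub, map_sub, ← mul_assoc, ← mul_assoc, mul_assoc a, htw a (c * b),
    mul_assoc]

theorem mem_dualAnnihilator_twistedCommutatorSpan_iff (φ : Dual R A) :
    φ ∈ (twistedCommutatorSpan R f).dualAnnihilator ↔ ∀ a b : A, φ (a * b - b * f a) = 0 := by
  rw [twistedCommutatorSpan, ← SetLike.mem_coe, Submodule.coe_dualAnnihilator_span]
  exact ⟨fun h a b => h ⟨a, b, rfl⟩, fun h _ ⟨a, b, hx⟩ => hx ▸ h a b⟩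

theorem frobeniusForm_mem_dualAnnihilator_iff (hnd : (frobeniusForm ε).SeparatingLeft)
    (htw : ∀ a b : A, ε (a * b) = ε (b * f a)) (c : A) :
    frobeniusForm ε c ∈ (twistedCommutatorSpan R f).dualAnnihilator ↔
      c ∈ Subalgebra.center R A := by
  simp only [mem_dualAnnihilator_twistedCommutatorSpan_iff, frobeniusForm_apply,
    trace_mul_twistedCommutator htw, Subalgebra.mem_center_iff]
  refine forall_congr' fun a => ⟨fun h => ?_, fun h b => by rw [h, sub_self, zero_mul, map_zero]⟩
  exact (sub_eq_zero.mp (hnd _ h)).symm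

end TwistedTrace

theorem dual_quotient_twistedCommutator_equiv_center_general
    (k : Type*) [Field k] (A : Type*) [Ring A] [Algebra k A]
    [FiniteDimensional k A]
    (ε : A →ₗ[k] k)
    (hnd : ∀ a : A, (∀ b : A, ε (a * b) = 0) → a = 0)
    (f : A →ₐ[k] A)
    (htw : ∀ a b : A, ε (a * b) = ε (b * f a)) :
    Nonempty
      (Module.Dual k (A ⧸ Submodule.span k {x : A | ∃ a b : A, x = a * b - b * f a})
        ≃ₗ[k] Subalgebra.center k A) := by
  have hB : (frobeniusForm ε).Nondegenerate := .ofSeparatingLeft hnd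
  set W := twistedCommutatorSpan k ⇑f
  have hcomap : W.dualAnnihilator.comap ((frobeniusForm ε).toDual hB).toLinearMap =
      Subalgebra.toSubmodule (Subalgebra.center k A) := by
    ext c
    exact frobeniusForm_mem_dualAnnihilator_iff hnd htw c
  exact ⟨W.dualQuotEquivDualAnnihilator.trans <|
    (((frobeniusForm ε).toDual hB).ofSubmodule' W.dualAnnihilator).symm.trans <|
      LinearEquiv.ofEq _ _ hcomap⟩

/-- For a Frobenius algebra `A` over a field `k` with Nakayama-type
involution `f` (an algebra automorphism with `f² = id` and `ε(ab) = ε(b·f(a))`),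
the dual of the quotient of `A` by the twisted commutator subspace
(spanned by `ab − b·f(a)`) is isomorphic to the center `Z(A)`. -/
theorem dual_quotient_twistedCommutator_equiv_center
    (k : Type*) [Field k] (A : Type*) [Ring A] [Algebra k A]
    [FiniteDimensional k A]
    (ε : A →ₗ[k] k)
    (hnd : ∀ a : A, (∀ b : A, ε (a * b) = 0) → a = 0)
    (f : A →ₐ[k] A)
    (hinv : ∀ a : A, f (f a) = a)
    (htw : ∀ a b : A, ε (a * b) = ε (b * f a)) :
    Nonempty
      (Module.Dual k (A ⧸ Submodule.span k {x : A | ∃ a b : A, x = a * b - b * f a})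
        ≃ₗ[k] Subalgebra.center k A) :=
  dual_quotient_twistedCommutator_equiv_center_general k A ε hnd f htw
end

section
/- Let A be a finite-dimensional Frobenius algebra over a field k with trace ε and involution f as above, and define the twisted center TZ(A) = {b ∈ A : ba = f(a)b for all a ∈ A}. Then the dual vector space of A/[A,A] is isomorphic to TZ(A). -/
/-- The twisted center `TZ(A) = {b | ∀ a, b*a = f(a)*b}` as a `k`-submodule. -/
def twistedCenter (k : Type*) [Field k] (A : Type*) [Ring A] [Algebra k A]
    (f : A →ₐ[k] A) : Submodule k A where
  carrier := {b : A | ∀ a : A, b * a = f a * b}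
  add_mem' := by
    intro x y hx hy a
    simp only [add_mul, mul_add, hx a, hy a]
  zero_mem' := by intro a; simp
  smul_mem' := by
    intro c x hx a
    simp only [smul_mul_assoc, mul_smul_comm, hx a]

/-!
The trace form `(b, a) ↦ ε (b * a)` identifies `A` with its dual, and the dual of `A/[A,A]` with
the annihilator of `[A,A]`, i.e. with the functionals `φ` satisfying `φ (a * c) = φ (c * a)`.
For `φ = ε (b * ·)` the twisting rule `ε (c * a) = ε (f a * c)` turns this condition into
`ε ((b * a - f a * b) * c) = 0` for all `c`, which by nondegeneracy says `b ∈ TZ(A)`.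
-/

open Module Submodule

section

variable {k A : Type*} [CommRing k] [Ring A] [Algebra k A]

variable (k A) in
def commutatorSpan : Submodule k A :=
  span k {x : A | ∃ a b : A, x = a * b - b * a}

theorem mem_dualAnnihilator_commutatorSpan_iff {φ : Dual k A} :
    φ ∈ (commutatorSpan k A).dualAnnihilator ↔ ∀ a b : A, φ (a * b) = φ (b * a) := by
  rw [mem_dualAnnihilator]
  change commutatorSpan k A ≤ LinearMap.ker φ ↔ _
  rw [commutatorSpan, span_le]
  constructor
  · intro h a b
    exact sub_eq_zero.mp (by simpa using h ⟨a, b, rfl⟩)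
  · rintro h _ ⟨a, b, rfl⟩
    simp [h a b]

def traceForm (ε : A →ₗ[k] k) : LinearMap.BilinForm k A :=
  (LinearMap.mul k A).compr₂ ε

@[simp]
theorem traceForm_apply (ε : A →ₗ[k] k) (b a : A) : traceForm ε b a = ε (b * a) :=
  rfl

theorem traceForm_injective {ε : A →ₗ[k] k} (hnd : ∀ a : A, (∀ b : A, ε (a * b) = 0) → a = 0) :
    Function.Injective (traceForm ε) :=
  LinearMap.ker_eq_bot.mp (LinearMap.separatingLeft_iff_ker_eq_bot.mp hnd)

end

theorem comap_traceForm_dualAnnihilator_commutatorSpan {k A : Type*} [Field k] [Ring A]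
    [Algebra k A] {ε : A →ₗ[k] k} {f : A →ₐ[k] A}
    (hnd : ∀ a : A, (∀ b : A, ε (a * b) = 0) → a = 0)
    (hε : ∀ a c : A, ε (f a * c) = ε (c * a)) :
    (commutatorSpan k A).dualAnnihilator.comap (traceForm ε) = twistedCenter k A f := by
  ext b
  have twisted (a c : A) : ε (b * (c * a)) = ε (f a * b * c) := by
    rw [mul_assoc, hε, mul_assoc]
  rw [mem_comap, mem_dualAnnihilator_commutatorSpan_iff]
  simp only [traceForm_apply]
  constructor
  · intro h a
    refine sub_eq_zero.mp (hnd _ fun c => ?_)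
    rw [sub_mul, map_sub, mul_assoc, h, twisted, sub_self]
  · intro hb a c
    rw [twisted a c, ← hb a, mul_assoc]

/-- For a Frobenius algebra `A` with involution `f` as above,
the dual of `A/[A,A]` is isomorphic to the twisted center `TZ(A)`. -/
theorem dual_quotient_commutator_equiv_twistedCenter
    (k : Type*) [Field k] (A : Type*) [Ring A] [Algebra k A]
    [FiniteDimensional k A]
    (ε : A →ₗ[k] k)
    (hnd : ∀ a : A, (∀ b : A, ε (a * b) = 0) → a = 0)
    (f : A →ₐ[k] A)
    (hinv : ∀ a : A, f (f a) = a)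
    (htw : ∀ a b : A, ε (a * b) = ε (b * f a)) :
    Nonempty
      (Module.Dual k (A ⧸ Submodule.span k {x : A | ∃ a b : A, x = a * b - b * a})
        ≃ₗ[k] twistedCenter k A f) := by
  have hε (a c : A) : ε (f a * c) = ε (c * a) := by rw [htw, hinv]
  let e : A ≃ₗ[k] Dual k A := (traceForm ε).linearEquivOfInjective (traceForm_injective hnd)
    Subspace.dual_finrank_eq.symm
  have he : (commutatorSpan k A).dualAnnihilator.map (e.symm : Dual k A →ₗ[k] A) =
      twistedCenter k A f := by
    rw [map_equiv_eq_comap_symm]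
    exact comap_traceForm_dualAnnihilator_commutatorSpan hnd hε
  exact ⟨(commutatorSpan k A).dualQuotEquivDualAnnihilator.trans (e.symm.ofSubmodules _ _ he)⟩
end

section
/- Define ε on the Nilcoxeter algebra NC_n by ε(T_σ) = 1 if σ = w₀ (the longest element of S_n, of length n(n−1)/2) and ε(T_σ) = 0 otherwise, extended linearly. Then ε is nondegenerate: for every σ ∈ S_n there exist γ, γ′ ∈ S_n with T_σ T_γ = T_{γ′} T_σ = T_{w₀}. Consequently the bilinear form (a,b) ↦ ε(ab) on NC_n is nondegenerate. -/
/-!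
Since `w₀` reverses the order of `Fin m`, the inversions of `w₀ σ` are exactly the non-inversions
of `σ`, so `ℓ(w₀ σ) + ℓ(σ) = ℓ(w₀)`. Hence `T_σ T_{σ⁻¹ w₀} = T_{w₀}`, while for `τ ≠ σ` the product
`T_τ T_{σ⁻¹ w₀}` is `0` or `T_{τ σ⁻¹ w₀} ≠ T_{w₀}`. So `b ↦ ε(b T_{σ⁻¹ w₀})` is the `σ`-th coordinate
functional, and `ε(a b) = 0` for all `b` forces every coordinate of `a` to vanish; symmetrically on
the other side with `T_{w₀ σ⁻¹}`.
-/

def invLength {m : ℕ} (σ : Equiv.Perm (Fin m)) : ℕ :=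
  (Finset.univ.filter (fun p : Fin m × Fin m => p.1 < p.2 ∧ σ p.2 < σ p.1)).card

def longest (m : ℕ) : Equiv.Perm (Fin m) :=
  ⟨Fin.rev, Fin.rev, fun i => i.rev_rev, fun i => i.rev_rev⟩

namespace Module.Basis

variable {ι k A : Type*} [CommSemiring k] [Semiring A] [Algebra k A]

theorem eq_zero_of_forall_apply_mul_right_eq_zero (B : Basis ι k A) (φ : A →ₗ[k] k) (c : ι → A)
    (hc : ∀ σ τ, φ (B τ * c σ) = B.coord σ (B τ)) (a : A) (ha : ∀ b, φ (a * b) = 0) : a = 0 := by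
  rw [← B.forall_coord_eq_zero_iff]
  intro σ
  have hcoord : B.coord σ = φ ∘ₗ LinearMap.mulRight k (c σ) :=
    B.ext fun τ => (hc σ τ).symm
  rw [hcoord]
  exact ha _

theorem eq_zero_of_forall_apply_mul_left_eq_zero (B : Basis ι k A) (φ : A →ₗ[k] k) (c : ι → A)
    (hc : ∀ σ τ, φ (c σ * B τ) = B.coord σ (B τ)) (b : A) (hb : ∀ a, φ (a * b) = 0) : b = 0 := by
  rw [← B.forall_coord_eq_zero_iff]
  intro σ
  have hcoord : B.coord σ = φ ∘ₗ LinearMap.mulLeft k (c σ) :=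
    B.ext fun τ => (hc σ τ).symm
  rw [hcoord]
  exact hb _

end Module.Basis

section GradedBasis

variable {k A G : Type*} [CommSemiring k] [Semiring A] [Algebra k A] [Group G]
  {ℓ : G → ℕ} {B : Module.Basis G k A}

theorem coord_basis_mul_basis_eq_zero
    (hmul : ∀ σ γ, B σ * B γ = if ℓ (σ * γ) = ℓ σ + ℓ γ then B (σ * γ) else 0)
    {w τ γ : G} (h : τ * γ ≠ w) : B.coord w (B τ * B γ) = 0 := by
  rw [hmul]
  split_ifs
  · simp [h]
  · simp

theorem basis_mul_basis_inv_mul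
    (hmul : ∀ σ γ, B σ * B γ = if ℓ (σ * γ) = ℓ σ + ℓ γ then B (σ * γ) else 0)
    {w σ : G} (hw : ℓ w = ℓ σ + ℓ (σ⁻¹ * w)) : B σ * B (σ⁻¹ * w) = B w := by
  rw [hmul, mul_inv_cancel_left, if_pos hw]

theorem basis_mul_inv_mul_basis
    (hmul : ∀ σ γ, B σ * B γ = if ℓ (σ * γ) = ℓ σ + ℓ γ then B (σ * γ) else 0)
    {w σ : G} (hw : ℓ w = ℓ (w * σ⁻¹) + ℓ σ) : B (w * σ⁻¹) * B σ = B w := by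
  rw [hmul, inv_mul_cancel_right, if_pos hw]

theorem coord_basis_mul_basis_inv_mul
    (hmul : ∀ σ γ, B σ * B γ = if ℓ (σ * γ) = ℓ σ + ℓ γ then B (σ * γ) else 0)
    {w σ : G} (hw : ℓ w = ℓ σ + ℓ (σ⁻¹ * w)) (τ : G) :
    B.coord w (B τ * B (σ⁻¹ * w)) = B.coord σ (B τ) := by
  by_cases hτ : τ = σ
  · subst hτ
    simp [basis_mul_basis_inv_mul hmul hw]
  · rw [coord_basis_mul_basis_eq_zero hmul (by simpa [← mul_assoc, mul_inv_eq_one] using hτ)]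
    simp [Ne.symm hτ]

theorem coord_basis_mul_inv_mul_basis
    (hmul : ∀ σ γ, B σ * B γ = if ℓ (σ * γ) = ℓ σ + ℓ γ then B (σ * γ) else 0)
    {w σ : G} (hw : ℓ w = ℓ (w * σ⁻¹) + ℓ σ) (τ : G) :
    B.coord w (B (w * σ⁻¹) * B τ) = B.coord σ (B τ) := by
  by_cases hτ : τ = σ
  · subst hτ
    simp [basis_mul_inv_mul_basis hmul hw]
  · rw [coord_basis_mul_basis_eq_zero hmul (by simpa [mul_assoc, inv_mul_eq_one] using Ne.symm hτ)]
    simp [Ne.symm hτ]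

end GradedBasis

section InvLength

variable {m : ℕ}

theorem invLength_inv (σ : Equiv.Perm (Fin m)) : invLength σ⁻¹ = invLength σ := by
  unfold invLength
  refine Finset.card_bij' (fun p _ => (σ⁻¹ p.2, σ⁻¹ p.1)) (fun p _ => (σ p.2, σ p.1)) ?_ ?_
    (by simp) (by simp)
  · intro p hp
    simp only [Finset.mem_filter, Finset.mem_univ, true_and] at hp ⊢
    simpa using hp.symm
  · intro p hp
    simp only [Finset.mem_filter, Finset.mem_univ, true_and] at hp ⊢
    simpa using hp.symm

theorem invLength_longest_mul_add (σ : Equiv.Perm (Fin m)) :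
    invLength (longest m * σ) + invLength σ = invLength (longest m) := by
  unfold invLength
  have hrev : ∀ i j : Fin m, longest m i < longest m j ↔ j < i := fun _ _ => Fin.rev_lt_rev
  have hlongest : Finset.univ.filter (fun p : Fin m × Fin m =>
      p.1 < p.2 ∧ longest m p.2 < longest m p.1) = Finset.univ.filter (fun p => p.1 < p.2) :=
    Finset.filter_congr fun p _ => by simp [hrev]
  have hcompl : Finset.univ.filter (fun p : Fin m × Fin m =>
      p.1 < p.2 ∧ (longest m * σ) p.2 < (longest m * σ) p.1) =
      (Finset.univ.filter (fun p : Fin m × Fin m => p.1 < p.2)).filter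
        (fun p => ¬ σ p.2 < σ p.1) := by
    rw [Finset.filter_filter]
    refine Finset.filter_congr fun p _ => ?_
    simp only [Equiv.Perm.mul_apply, hrev, not_lt]
    exact and_congr_right fun h => (le_iff_lt_or_eq.trans (or_iff_left
      (σ.injective.ne (ne_of_lt h)))).symm
  rw [hlongest, hcompl, ← Finset.filter_filter, add_comm]
  exact Finset.card_filter_add_card_filter_not _

theorem invLength_longest_eq_add_inv_mul (σ : Equiv.Perm (Fin m)) :
    invLength (longest m) = invLength σ + invLength (σ⁻¹ * longest m) := by
  have hinv : σ⁻¹ * longest m = (longest m * σ)⁻¹ := by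
    rw [mul_inv_rev]
    rfl
  rw [hinv, invLength_inv, add_comm, invLength_longest_mul_add]

theorem invLength_longest_eq_mul_inv_add (σ : Equiv.Perm (Fin m)) :
    invLength (longest m) = invLength (longest m * σ⁻¹) + invLength σ := by
  rw [← invLength_longest_mul_add σ⁻¹, invLength_inv]

end InvLength

theorem nilCoxeter_trace_nondegenerate_general
    (k : Type*) [Field k] (A : Type*) [Ring A] [Algebra k A] (n : ℕ)
    (B : Module.Basis (Equiv.Perm (Fin (n + 1))) k A)
    (hmul : ∀ σ γ : Equiv.Perm (Fin (n + 1)),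
      B σ * B γ =
        if invLength (σ * γ) = invLength σ + invLength γ then B (σ * γ) else 0) :
    (∀ σ : Equiv.Perm (Fin (n + 1)), ∃ γ γ' : Equiv.Perm (Fin (n + 1)),
        B σ * B γ = B (longest (n + 1)) ∧ B γ' * B σ = B (longest (n + 1))) ∧
    (∀ a : A, (∀ b : A, B.coord (longest (n + 1)) (a * b) = 0) → a = 0) ∧
    (∀ b : A, (∀ a : A, B.coord (longest (n + 1)) (a * b) = 0) → b = 0) := by
  set w := longest (n + 1)
  refine ⟨fun σ => ⟨σ⁻¹ * w, w * σ⁻¹, ?_, ?_⟩, ?_, ?_⟩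
  · exact basis_mul_basis_inv_mul hmul (invLength_longest_eq_add_inv_mul σ)
  · exact basis_mul_inv_mul_basis hmul (invLength_longest_eq_mul_inv_add σ)
  · exact B.eq_zero_of_forall_apply_mul_right_eq_zero _ (fun σ => B (σ⁻¹ * w))
      fun σ => coord_basis_mul_basis_inv_mul hmul (invLength_longest_eq_add_inv_mul σ)
  · exact B.eq_zero_of_forall_apply_mul_left_eq_zero _ (fun σ => B (w * σ⁻¹))
      fun σ => coord_basis_mul_inv_mul_basis hmul (invLength_longest_eq_mul_inv_add σ)

/-- In the Nilcoxeter algebra `NC_{n+1}` (basis `T_w` with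
`T_σ T_γ = T_{σγ}` when lengths add, else `0`), the trace `ε(T_σ) = δ_{σ,w₀}`
is nondegenerate: for every `σ` there exist `γ, γ'` with
`T_σ T_γ = T_{γ'} T_σ = T_{w₀}`; consequently the bilinear form
`(a,b) ↦ ε(ab)` is nondegenerate. -/
theorem nilCoxeter_trace_nondegenerate
    (k : Type*) [Field k] (A : Type*) [Ring A] [Algebra k A] (n : ℕ)
    (B : Module.Basis (Equiv.Perm (Fin (n + 1))) k A)
    (hone : B 1 = 1)
    (hmul : ∀ σ γ : Equiv.Perm (Fin (n + 1)),
      B σ * B γ =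
        if invLength (σ * γ) = invLength σ + invLength γ then B (σ * γ) else 0) :
    (∀ σ : Equiv.Perm (Fin (n + 1)), ∃ γ γ' : Equiv.Perm (Fin (n + 1)),
        B σ * B γ = B (longest (n + 1)) ∧ B γ' * B σ = B (longest (n + 1))) ∧
    (∀ a : A, (∀ b : A, B.coord (longest (n + 1)) (a * b) = 0) → a = 0) ∧
    (∀ b : A, (∀ a : A, B.coord (longest (n + 1)) (a * b) = 0) → b = 0) :=
  nilCoxeter_trace_nondegenerate_general k A n B hmul
end
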